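/- Let α > 0 and suppose either (a) f ∈ L¹_q(A_{q,a}) and g is bounded on A_{q,a}, or (b) α ≠ 1/2 and f, g ∈ L²_q(A_{q,a}). Then the fractional q-integration by parts formula ∫_0^a g(x) (I^α_{q,0^+}f)(x) d_q x = ∫_0^a f(x) (I^α_{q,a^-}g)(x) d_q x holds. -/

import Mathlib

open Filter

noncomputable section

namespace QFrac

variable (q : ℝ)

/-- infinite q-shifted factorial `(z;q)_∞` -/
def pochInf (z : ℝ) : ℝ := ∏' n : ℕ, (1 - z * q ^ n)

/-- generalized q-shifted factorial `(z;q)_ν = (z;q)_∞ / (z q^ν;q)_∞` -/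
def poch (z ν : ℝ) : ℝ := pochInf q z / pochInf q (z * q ^ ν)

/-- finite q-shifted factorial `(z;q)_k` -/
def pochN (z : ℝ) (k : ℕ) : ℝ := ∏ i ∈ Finset.range k, (1 - z * q ^ i)

/-- q-Gamma function -/
def qGamma (α : ℝ) : ℝ := pochInf q q / pochInf q (q ^ α) * (1 - q) ^ (1 - α)

/-- Jackson q-integral `∫_0^a f(t) d_q t` -/
def jackson (a : ℝ) (f : ℝ → ℝ) : ℝ := (1 - q) * a * ∑' n : ℕ, q ^ n * f (a * q ^ n)

/-- Jackson q-integral `∫_c^b f(t) d_q t` -/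
def jacksonI (c b : ℝ) (f : ℝ → ℝ) : ℝ := jackson q b f - jackson q c f

/-- left-sided Riemann–Liouville q-fractional integral `I^α_{q,0^+}` -/
def Ileft (α : ℝ) (f : ℝ → ℝ) (x : ℝ) : ℝ :=
  x ^ (α - 1) / qGamma q α * jackson q x (fun t => poch q (q * t / x) (α - 1) * f t)

/-- right-sided Riemann–Liouville q-fractional integral `I^α_{q,b^-}` -/
def Iright (b α : ℝ) (f : ℝ → ℝ) (x : ℝ) : ℝ :=
  (qGamma q α)⁻¹ *
    jacksonI q (q * x) b (fun t => t ^ (α - 1) * poch q (q * x / t) (α - 1) * f t)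

/-- Jackson q-derivative -/
def Dq (f : ℝ → ℝ) (x : ℝ) : ℝ := (f x - f (q * x)) / ((1 - q) * x)

/-- Jackson `q⁻¹`-derivative -/
def Dqinv (f : ℝ → ℝ) (x : ℝ) : ℝ := (f x - f (x / q)) / ((1 - q⁻¹) * x)

/-- left-sided Caputo q-fractional derivative of order `α ∈ (0,1)` -/
def CDleft (α : ℝ) (f : ℝ → ℝ) : ℝ → ℝ := Ileft q (1 - α) (Dq q f)

/-- left-sided Riemann–Liouville q-fractional derivative of order `α ∈ (0,1)` -/
def DRLleft (α : ℝ) (f : ℝ → ℝ) : ℝ → ℝ := Dq q (Ileft q (1 - α) f)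

/-- right-sided Riemann–Liouville q-fractional derivative of order `α ∈ (0,1)` -/
def DRLright (b α : ℝ) (f : ℝ → ℝ) (x : ℝ) : ℝ :=
  (-1 / q) * Dqinv q (fun t => Iright q b (1 - α) f t) x

/-- right-sided Caputo q-fractional derivative of order `α ∈ (0,1)` -/
def CDright (b α : ℝ) (f : ℝ → ℝ) (x : ℝ) : ℝ :=
  (-1 / q) * Iright q b (1 - α) (Dqinv q f) x

/-- `f ∈ L¹_q(A^*_{q,a})` -/
def MemL1 (a : ℝ) (f : ℝ → ℝ) : Prop := Summable (fun n : ℕ => q ^ n * |f (a * q ^ n)|)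

/-- `f ∈ L²_q(A^*_{q,a})` -/
def MemL2 (a : ℝ) (f : ℝ → ℝ) : Prop := Summable (fun n : ℕ => q ^ n * (f (a * q ^ n)) ^ 2)

/-- the `L²_q` norm -/
def norm2 (a : ℝ) (f : ℝ → ℝ) : ℝ := Real.sqrt (jackson q a (fun t => (f t) ^ 2))

/-- `f` is q-regular at zero (its value at `0` is the limit along the q-grid) -/
def qRegular (a : ℝ) (f : ℝ → ℝ) : Prop :=
  Tendsto (fun n : ℕ => f (a * q ^ n)) atTop (nhds (f 0))

/-- the limit at zero along the q-grid exists -/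
def qRegular' (a : ℝ) (f : ℝ → ℝ) : Prop :=
  ∃ L : ℝ, Tendsto (fun n : ℕ => f (a * q ^ n)) atTop (nhds L)

/-- sup norm on `A^*_{q,a}` -/
def supNorm (a : ℝ) (f : ℝ → ℝ) : ℝ := max (⨆ n : ℕ, |f (a * q ^ n)|) |f 0|

/-- bounded q-variation part of q-absolute continuity -/
def qACvar (a : ℝ) (f : ℝ → ℝ) : Prop :=
  ∃ K : ℝ, ∀ m N : ℕ,
    ∑ j ∈ Finset.range N, |f (a * q ^ (m + j)) - f (a * q ^ (m + j + 1))| ≤ K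

/-- q-absolute continuity on `A^*_{q,a}` -/
def qAC (a : ℝ) (f : ℝ → ℝ) : Prop := qRegular q a f ∧ qACvar q a f

/-- little q-Jacobi polynomial `p_n(x; q^A, q^B | q)` -/
def littleJacobi (n : ℕ) (A B x : ℝ) : ℝ :=
  ∑ k ∈ Finset.range (n + 1),
    pochN q (q ^ (-(n : ℝ))) k * pochN q (q ^ (A + B + (n : ℝ) + 1)) k /
      (pochN q (q ^ (A + 1)) k * pochN q q k) * (q * x) ^ k

end QFrac

/-!
On the grid `a q^n` both sides are double series. With `c_k = (q^{k+1}; q)_{α-1}`, the left side is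
a constant times `∑_n ∑_k c_k q^{αn} q^{n+k} g(a q^n) f(a q^{n+k})`, and the right side is the same
series summed along the diagonals `n + k = N`: the kernel `(q x / t; q)_{α-1}` of the right-sided
integral vanishes at the grid points `t < x`, because `(q^{-j}; q)_∞` has the factor `1 - q^{-j} q^j`.
Since `0 ≤ c_k ≤ 1 / (q^α; q)_∞`, absolute convergence reduces to that of
`∑ q^{αn} q^{n+k} |g(a q^n)| |f(a q^{n+k})|`. In case (a) it is dominated by `C ∑_n q^{αn} ‖f‖₁`;
in case (b), `2|g||f| ≤ g² + f²` bounds it by the product series `‖g‖₂² ∑_k q^k` plus a series of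
the kind in case (a) with `f²` in place of `|f|`.
-/

open Finset

theorem Summable.tsum_tsum_eq_tsum_sum_antidiagonal {A E : Type*} [AddCommMonoid A]
    [HasAntidiagonal A] [NormedAddCommGroup E] [CompleteSpace E] {u : A × A → E}
    (hu : Summable u) :
    ∑' n, ∑' k, u (n, k) = ∑' N, ∑ p ∈ antidiagonal N, u p := by
  have hσ := (HasAntidiagonal.sigmaAntidiagonalEquivProd (A := A)).summable_iff.2 hu
  rw [← hu.tsum_prod' hu.prod_factor, ← HasAntidiagonal.sigmaAntidiagonalEquivProd.tsum_eq u]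
  exact (hσ.tsum_sigma' fun N => (hasSum_fintype _).summable).trans
    (tsum_congr fun N => Finset.tsum_subtype _ _)

theorem summable_pow_mul_add {r : ℝ} (hr0 : 0 ≤ r) (hr1 : r < 1) {x : ℕ → ℝ}
    (hx0 : ∀ j, 0 ≤ x j) (hx : Summable x) :
    Summable fun p : ℕ × ℕ => r ^ p.1 * x (p.1 + p.2) := by
  refine (summable_prod_of_nonneg fun p => mul_nonneg (pow_nonneg hr0 _) (hx0 _)).2
    ⟨fun n => (hx.comp_injective (add_right_injective n)).mul_left (r ^ n), ?_⟩
  refine ((summable_geometric_of_lt_one hr0 hr1).mul_right (∑' j, x j)).of_nonneg_of_le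
    (fun n => tsum_nonneg fun k => mul_nonneg (pow_nonneg hr0 _) (hx0 _)) fun n => ?_
  simp only [tsum_mul_left]
  exact mul_le_mul_of_nonneg_left (tsum_comp_le_tsum_of_inj hx hx0 (add_right_injective n))
    (pow_nonneg hr0 n)

namespace QFrac

variable {q a α z z' : ℝ} {f g : ℝ → ℝ}

lemma summable_log_one_sub_mul_pow (hq0 : 0 ≤ q) (hq1 : q < 1) :
    Summable fun n : ℕ => Real.log (1 - z * q ^ n) := by
  simpa [sub_eq_add_neg] using
    Real.summable_log_one_add_of_summable ((summable_geometric_of_lt_one hq0 hq1).mul_left (-z))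

lemma one_sub_mul_pow_pos (hq0 : 0 ≤ q) (hq1 : q ≤ 1) (hz : z < 1) (n : ℕ) :
    0 < 1 - z * q ^ n := by
  have h0 := pow_nonneg hq0 n
  have h1 := pow_le_one₀ hq0 hq1 (n := n)
  rcases le_or_gt 0 z with hz0 | hz0 <;> nlinarith

lemma pochInf_eq_exp (hq0 : 0 ≤ q) (hq1 : q < 1) (hz : z < 1) :
    pochInf q z = Real.exp (∑' n : ℕ, Real.log (1 - z * q ^ n)) :=
  (Real.rexp_tsum_eq_tprod (one_sub_mul_pow_pos hq0 hq1.le hz)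
    (summable_log_one_sub_mul_pow hq0 hq1)).symm

lemma pochInf_pos (hq0 : 0 ≤ q) (hq1 : q < 1) (hz : z < 1) : 0 < pochInf q z := by
  rw [pochInf_eq_exp hq0 hq1 hz]
  exact Real.exp_pos _

lemma pochInf_antitone (hq0 : 0 ≤ q) (hq1 : q < 1) (hzz' : z ≤ z') (hz' : z' < 1) :
    pochInf q z' ≤ pochInf q z := by
  rw [pochInf_eq_exp hq0 hq1 hz', pochInf_eq_exp hq0 hq1 (hzz'.trans_lt hz'), Real.exp_le_exp]
  refine Summable.tsum_le_tsum (fun n => ?_) (summable_log_one_sub_mul_pow (z := z') hq0 hq1)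
    (summable_log_one_sub_mul_pow (z := z) hq0 hq1)
  have := mul_le_mul_of_nonneg_right hzz' (pow_nonneg hq0 n)
  exact Real.log_le_log (one_sub_mul_pow_pos hq0 hq1.le hz' n) (by linarith)

lemma pochInf_zero : pochInf q 0 = 1 := by simp [pochInf]

lemma pochInf_le_one (hq0 : 0 ≤ q) (hq1 : q < 1) (hz0 : 0 ≤ z) (hz1 : z < 1) :
    pochInf q z ≤ 1 :=
  pochInf_zero (q := q) ▸ pochInf_antitone hq0 hq1 hz0 hz1

lemma poch_eq_zero_of_mul_pow_eq_one {n : ℕ} (ν : ℝ) (h : z * q ^ n = 1) : poch q z ν = 0 := by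
  rw [poch, pochInf, tprod_of_exists_eq_zero ⟨n, by rw [h, sub_self]⟩, zero_div]

lemma poch_nonneg (hq0 : 0 ≤ q) (hq1 : q < 1) {ν : ℝ} (hz : z < 1) (hzν : z * q ^ ν < 1) :
    0 ≤ poch q z ν :=
  div_nonneg (pochInf_pos hq0 hq1 hz).le (pochInf_pos hq0 hq1 hzν).le

lemma pow_succ_mul_rpow_sub_one (hq : 0 < q) (k : ℕ) :
    q ^ (k + 1) * q ^ (α - 1) = q ^ ((k : ℝ) + α) := by
  rw [← Real.rpow_natCast, ← Real.rpow_add hq]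
  push_cast
  ring_nf

lemma poch_pow_succ_nonneg (hq0 : 0 < q) (hq1 : q < 1) (hα : 0 < α) (k : ℕ) :
    0 ≤ poch q (q ^ (k + 1)) (α - 1) := by
  refine poch_nonneg hq0.le hq1 (pow_lt_one₀ hq0.le hq1 k.succ_ne_zero) ?_
  rw [pow_succ_mul_rpow_sub_one hq0]
  exact Real.rpow_lt_one hq0.le hq1 (by positivity)

lemma poch_pow_succ_le (hq0 : 0 < q) (hq1 : q < 1) (hα : 0 < α) (k : ℕ) :
    poch q (q ^ (k + 1)) (α - 1) ≤ (pochInf q (q ^ α))⁻¹ := by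
  have hqα : q ^ α < 1 := Real.rpow_lt_one hq0.le hq1 hα
  rw [poch, pow_succ_mul_rpow_sub_one hq0, ← one_div]
  refine div_le_div₀ zero_le_one
    (pochInf_le_one hq0.le hq1 (by positivity) (pow_lt_one₀ hq0.le hq1 k.succ_ne_zero))
    (pochInf_pos hq0.le hq1 hqα) (pochInf_antitone hq0.le hq1 ?_ hqα)
  exact Real.rpow_le_rpow_of_exponent_ge hq0 hq1.le (by simp)

lemma mul_pow_rpow_sub_one_mul_pow (ha : 0 ≤ a) (hq : 0 < q) (n : ℕ) :
    (a * q ^ n) ^ (α - 1) * q ^ n = a ^ (α - 1) * (q ^ α) ^ n := by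
  rw [Real.mul_rpow ha (by positivity), mul_assoc, Real.rpow_sub_one (x := q ^ n) (by positivity),
    div_mul_cancel₀ _ (by positivity), Real.rpow_pow_comm hq.le]

lemma Ileft_apply_mul_pow (ha : 0 < a) (hq : 0 < q) (n : ℕ) :
    Ileft q α f (a * q ^ n) = a ^ (α - 1) * ((1 - q) * a) / qGamma q α * (q ^ α) ^ n *
      ∑' k : ℕ, q ^ k * (poch q (q ^ (k + 1)) (α - 1) * f (a * q ^ (n + k))) := by
  have hgrid : ∀ k : ℕ, a * q ^ n * q ^ k = a * q ^ (n + k) := fun k => by ring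
  have hkernel : ∀ k : ℕ, q * (a * q ^ (n + k)) / (a * q ^ n) = q ^ (k + 1) := fun k => by
    field_simp; ring
  simp only [Ileft, jackson, hgrid, hkernel]
  linear_combination (1 - q) * a / qGamma q α *
      (∑' k : ℕ, q ^ k * (poch q (q ^ (k + 1)) (α - 1) * f (a * q ^ (n + k)))) *
    mul_pow_rpow_sub_one_mul_pow (α := α) ha.le hq n

lemma jackson_kernel_lower_eq_zero (hq : q ≠ 0) {x : ℝ} (hx : x ≠ 0) :
    jackson q (q * x) (fun t => t ^ (α - 1) * poch q (q * x / t) (α - 1) * g t) = 0 := by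
  have hterm : ∀ m : ℕ, poch q (q * x / (q * x * q ^ m)) (α - 1) = 0 := fun m =>
    poch_eq_zero_of_mul_pow_eq_one (n := m) _ (by field_simp)
  simp [jackson, hterm]

lemma Iright_apply_mul_pow (ha : 0 < a) (hq : 0 < q) (N : ℕ) :
    Iright q a α g (a * q ^ N) = a ^ (α - 1) * ((1 - q) * a) / qGamma q α *
      ∑ m ∈ range (N + 1), (q ^ α) ^ m * (poch q (q ^ (N - m + 1)) (α - 1) * g (a * q ^ m)) := by
  have hvanish : ∀ m ∉ range (N + 1),
      q ^ m * ((a * q ^ m) ^ (α - 1) * poch q (q * (a * q ^ N) / (a * q ^ m)) (α - 1) *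
        g (a * q ^ m)) = 0 := by
    intro m hm
    obtain ⟨d, rfl⟩ : ∃ d, m = N + 1 + d := ⟨m - (N + 1), by simp at hm; omega⟩
    rw [poch_eq_zero_of_mul_pow_eq_one (n := d) _ (by field_simp; ring)]
    ring
  have hkernel : ∀ m ∈ range (N + 1), q * (a * q ^ N) / (a * q ^ m) = q ^ (N - m + 1) := by
    intro m hm
    obtain ⟨d, rfl⟩ : ∃ d, N = m + d := ⟨N - m, by simp at hm; omega⟩
    rw [Nat.add_sub_cancel_left]
    field_simp; ring
  rw [Iright, jacksonI, jackson_kernel_lower_eq_zero hq.ne' (by positivity), sub_zero, jackson,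
    tsum_eq_sum hvanish, mul_sum, mul_sum, mul_sum]
  refine sum_congr rfl fun m hm => ?_
  rw [hkernel m hm]
  linear_combination (1 - q) * a / qGamma q α * poch q (q ^ (N - m + 1)) (α - 1) * g (a * q ^ m) *
    mul_pow_rpow_sub_one_mul_pow (α := α) ha.le hq m

lemma summable_grid_of_memL1_of_bounded (hq : 0 ≤ q) {r : ℝ} (hr0 : 0 ≤ r) (hr1 : r < 1)
    (hf : MemL1 q a f) {C : ℝ} (hg : ∀ n : ℕ, |g (a * q ^ n)| ≤ C) :
    Summable fun p : ℕ × ℕ =>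
      r ^ p.1 * (q ^ (p.1 + p.2) * (|g (a * q ^ p.1)| * |f (a * q ^ (p.1 + p.2))|)) := by
  refine ((summable_pow_mul_add hr0 hr1 (fun j => by positivity) hf).mul_left C).of_nonneg_of_le
    (fun p => by positivity) fun p => ?_
  have := mul_le_mul_of_nonneg_left (hg p.1)
    (by positivity : 0 ≤ r ^ p.1 * (q ^ (p.1 + p.2) * |f (a * q ^ (p.1 + p.2))|))
  linarith

lemma summable_grid_of_memL2 (hq0 : 0 ≤ q) (hq1 : q < 1) {r : ℝ} (hr0 : 0 ≤ r) (hr1 : r < 1)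
    (hf : MemL2 q a f) (hg : MemL2 q a g) :
    Summable fun p : ℕ × ℕ =>
      r ^ p.1 * (q ^ (p.1 + p.2) * (|g (a * q ^ p.1)| * |f (a * q ^ (p.1 + p.2))|)) := by
  have hG : Summable fun p : ℕ × ℕ => q ^ p.1 * g (a * q ^ p.1) ^ 2 * q ^ p.2 :=
    hg.mul_of_nonneg (summable_geometric_of_lt_one hq0 hq1) (fun n => by positivity)
      (fun n => by positivity)
  refine (hG.add (summable_pow_mul_add hr0 hr1 (fun j => by positivity) hf)).of_nonneg_of_le
    (fun p => by positivity) fun ⟨m, d⟩ => ?_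
  set X := |g (a * q ^ m)|
  set Y := |f (a * q ^ (m + d))|
  have hXY : X * Y ≤ X ^ 2 + Y ^ 2 := by nlinarith [sq_nonneg (X - Y)]
  have hrm : r ^ m ≤ 1 := pow_le_one₀ hr0 hr1.le
  have hQ : 0 ≤ q ^ (m + d) := by positivity
  calc r ^ m * (q ^ (m + d) * (X * Y))
      ≤ r ^ m * (q ^ (m + d) * X ^ 2) + r ^ m * (q ^ (m + d) * Y ^ 2) := by
        nlinarith [mul_le_mul_of_nonneg_left hXY (mul_nonneg (pow_nonneg hr0 m) hQ)]
    _ ≤ q ^ (m + d) * X ^ 2 + r ^ m * (q ^ (m + d) * Y ^ 2) := by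
        nlinarith [mul_le_mul_of_nonneg_right hrm (mul_nonneg hQ (sq_nonneg X))]
    _ = _ := by simp only [X, Y, sq_abs]; ring

def ibpSummand (q a α : ℝ) (f g : ℝ → ℝ) (p : ℕ × ℕ) : ℝ :=
  poch q (q ^ (p.2 + 1)) (α - 1) * (q ^ α) ^ p.1 *
    (q ^ (p.1 + p.2) * (g (a * q ^ p.1) * f (a * q ^ (p.1 + p.2))))

lemma summable_ibpSummand (hq0 : 0 < q) (hq1 : q < 1) (hα : 0 < α)
    (hsum : Summable fun p : ℕ × ℕ =>
      (q ^ α) ^ p.1 * (q ^ (p.1 + p.2) * (|g (a * q ^ p.1)| * |f (a * q ^ (p.1 + p.2))|))) :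
    Summable (ibpSummand q a α f g) := by
  refine (hsum.mul_left (pochInf q (q ^ α))⁻¹).of_norm_bounded fun p => ?_
  have hc := poch_pow_succ_nonneg hq0 hq1 hα p.2
  rw [Real.norm_eq_abs, ibpSummand, abs_mul, abs_mul, abs_mul, abs_mul, abs_of_nonneg hc,
    abs_of_nonneg (pow_nonneg (by positivity) _), abs_of_nonneg (pow_nonneg hq0.le _), mul_assoc]
  exact mul_le_mul_of_nonneg_right (poch_pow_succ_le hq0 hq1 hα p.2) (by positivity)

lemma jackson_mul_Ileft_eq (ha : 0 < a) (hq : 0 < q) :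
    jackson q a (fun x => g x * Ileft q α f x) =
      (1 - q) * a * (a ^ (α - 1) * ((1 - q) * a) / qGamma q α) *
        ∑' n, ∑' k, ibpSummand q a α f g (n, k) := by
  simp only [jackson, Ileft_apply_mul_pow ha hq, ibpSummand, ← tsum_mul_left]
  exact tsum_congr fun n => tsum_congr fun k => by ring

lemma jackson_mul_Iright_eq (ha : 0 < a) (hq : 0 < q) :
    jackson q a (fun x => f x * Iright q a α g x) =
      (1 - q) * a * (a ^ (α - 1) * ((1 - q) * a) / qGamma q α) *
        ∑' N, ∑ p ∈ antidiagonal N, ibpSummand q a α f g p := by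
  simp only [jackson, Iright_apply_mul_pow ha hq, ibpSummand,
    Nat.sum_antidiagonal_eq_sum_range_succ_mk, mul_sum, ← tsum_mul_left]
  refine tsum_congr fun N => sum_congr rfl fun m hm => ?_
  rw [Nat.add_sub_cancel' (Nat.lt_succ_iff.mp (mem_range.mp hm))]
  ring

theorem jackson_mul_Ileft_eq_jackson_mul_Iright (ha : 0 < a) (hq0 : 0 < q) (hq1 : q < 1) (hα : 0 < α)
    (hsum : Summable fun p : ℕ × ℕ =>
      (q ^ α) ^ p.1 * (q ^ (p.1 + p.2) * (|g (a * q ^ p.1)| * |f (a * q ^ (p.1 + p.2))|))) :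
    jackson q a (fun x => g x * Ileft q α f x) = jackson q a (fun x => f x * Iright q a α g x) := by
  rw [jackson_mul_Ileft_eq ha hq0, jackson_mul_Iright_eq ha hq0,
    (summable_ibpSummand hq0 hq1 hα hsum).tsum_tsum_eq_tsum_sum_antidiagonal]

end QFrac

/-- fractional q-integration by parts
`∫_0^a g · I^α_{q,0^+}f = ∫_0^a f · I^α_{q,a^-}g`. -/
theorem stmt11 (q a α : ℝ) (hq : 0 < q) (hq1 : q < 1) (ha : 0 < a) (hα : 0 < α)
    (f g : ℝ → ℝ)
    (h : (QFrac.MemL1 q a f ∧ ∃ C : ℝ, ∀ n : ℕ, |g (a * q ^ n)| ≤ C) ∨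
      (α ≠ 1 / 2 ∧ QFrac.MemL2 q a f ∧ QFrac.MemL2 q a g)) :
    QFrac.jackson q a (fun x => g x * QFrac.Ileft q α f x) =
      QFrac.jackson q a (fun x => f x * QFrac.Iright q a α g x) := by
  have hr0 : 0 ≤ q ^ α := by positivity
  have hr1 : q ^ α < 1 := Real.rpow_lt_one hq.le hq1 hα
  refine QFrac.jackson_mul_Ileft_eq_jackson_mul_Iright ha hq hq1 hα ?_
  rcases h with ⟨hf, C, hg⟩ | ⟨-, hf, hg⟩
  · exact QFrac.summable_grid_of_memL1_of_bounded hq.le hr0 hr1 hf hg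
  · exact QFrac.summable_grid_of_memL2 hq.le hq1 hr0 hr1 hf hg
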